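/- Let L ∈ ZF^{n,m} with n ≥ 3 and m ≥ 3 be a zero-filiform Leibniz superalgebra of nilindex n+m with an adapted basis {x₁,…,x_n,y₁,…,y_m}. Then L³ equals the linear span of {x₂,…,x_n, y₃,…,y_m}; in particular y₂ ∉ L³. -/

import Mathlib

/-- A complex Leibniz superalgebra: a ℤ₂-graded complex vector space `L = L₀ ⊕ L₁`
with a bilinear bracket satisfying `[L_α, L_β] ⊆ L_{α+β}` and the Leibniz
superidentity `[x,[y,z]] = [[x,y],z] − (−1)^{αβ}[[x,z],y]` for homogeneous `y, z`. -/
structure LeibnizSuper (L : Type*) [AddCommGroup L] [Module ℂ L] where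
  bracket : L →ₗ[ℂ] L →ₗ[ℂ] L
  L0 : Submodule ℂ L
  L1 : Submodule ℂ L
  compl : IsCompl L0 L1
  g00 : ∀ y ∈ L0, ∀ z ∈ L0, bracket y z ∈ L0
  g01 : ∀ y ∈ L0, ∀ z ∈ L1, bracket y z ∈ L1
  g10 : ∀ y ∈ L1, ∀ z ∈ L0, bracket y z ∈ L1
  g11 : ∀ y ∈ L1, ∀ z ∈ L1, bracket y z ∈ L0
  leib00 : ∀ x : L, ∀ y ∈ L0, ∀ z ∈ L0,
    bracket x (bracket y z) = bracket (bracket x y) z - bracket (bracket x z) y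
  leib01 : ∀ x : L, ∀ y ∈ L0, ∀ z ∈ L1,
    bracket x (bracket y z) = bracket (bracket x y) z - bracket (bracket x z) y
  leib10 : ∀ x : L, ∀ y ∈ L1, ∀ z ∈ L0,
    bracket x (bracket y z) = bracket (bracket x y) z - bracket (bracket x z) y
  leib11 : ∀ x : L, ∀ y ∈ L1, ∀ z ∈ L1,
    bracket x (bracket y z) = bracket (bracket x y) z + bracket (bracket x z) y

/-- `HasJordanType f ls` : the nilpotent endomorphism `f` has Jordan blocks of sizes
given by the decreasing list `ls` (the number of blocks of size `≥ j+1` equals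
`rank f^j − rank f^{j+1}`). -/
def HasJordanType {V : Type*} [AddCommGroup V] [Module ℂ V] (f : Module.End ℂ V)
    (ls : List ℕ) : Prop :=
  ls.Pairwise (· ≥ ·) ∧ (∀ a ∈ ls, 0 < a) ∧
  ∀ j : ℕ, ls.countP (fun a => decide (j + 1 ≤ a)) =
    Module.finrank ℂ (LinearMap.range (f ^ j)) -
      Module.finrank ℂ (LinearMap.range (f ^ (j + 1)))

namespace LeibnizSuper

variable {L : Type*} [AddCommGroup L] [Module ℂ L] (S : LeibnizSuper L)

/-- The span of all brackets `[a,b]`, `a ∈ p`, `b ∈ q`. -/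
def bracketSpan (p q : Submodule ℂ L) : Submodule ℂ L :=
  Submodule.span ℂ {z | ∃ a ∈ p, ∃ b ∈ q, z = S.bracket a b}

/-- Descending central series; `S.term k` is `L^{k+1}` (so `S.term 0 = L¹ = L`). -/
def term : ℕ → Submodule ℂ L
  | 0 => ⊤
  | k + 1 => S.bracketSpan (term k) ⊤

/-- `S.HasNilindex s` : `s` is the minimal natural number with `L^s = 0`. -/
def HasNilindex (s : ℕ) : Prop :=
  0 < s ∧ S.term (s - 1) = ⊥ ∧ ∀ t : ℕ, t + 1 < s → S.term t ≠ ⊥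

/-- The superalgebra is nilpotent. -/
def IsNilpotentSuper : Prop := ∃ s, S.term s = ⊥

/-- Right multiplication operator `R_x z = [z, x]`. -/
def R (x : L) : Module.End ℂ L := S.bracket.flip x

/-- Restriction of `R_x` (for `x ∈ L₀`) to the even part `L₀`. -/
def R0 (x : L) (hx : x ∈ S.L0) : Module.End ℂ S.L0 :=
  (S.R x).restrict (fun z hz => S.g00 z hz x hx)

/-- Restriction of `R_x` (for `x ∈ L₀`) to the odd part `L₁`. -/
def R1 (x : L) (hx : x ∈ S.L0) : Module.End ℂ S.L1 :=
  (S.R x).restrict (fun z hz => S.g10 z hz x hx)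

/-- `S.HasCharSeq ns ms` : the characteristic sequence of `S` is `(ns | ms)`, i.e.
`ns` (resp. `ms`) is the lexicographically maximal sequence of Jordan block sizes of
`R_x` restricted to `L₀` (resp. `L₁`) over all `x ∈ L₀ ∖ [L₀, L₀]`. -/
def HasCharSeq (ns ms : List ℕ) : Prop :=
  (∃ x, ∃ hx : x ∈ S.L0, x ∉ S.bracketSpan S.L0 S.L0 ∧ HasJordanType (S.R0 x hx) ns) ∧
  (∀ x, ∀ hx : x ∈ S.L0, x ∉ S.bracketSpan S.L0 S.L0 →
    ∀ ls, HasJordanType (S.R0 x hx) ls → ls = ns ∨ List.Lex (· < ·) ls ns) ∧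
  (∃ x, ∃ hx : x ∈ S.L0, x ∉ S.bracketSpan S.L0 S.L0 ∧ HasJordanType (S.R1 x hx) ms) ∧
  (∀ x, ∀ hx : x ∈ S.L0, x ∉ S.bracketSpan S.L0 S.L0 →
    ∀ ls, HasJordanType (S.R1 x hx) ls → ls = ms ∨ List.Lex (· < ·) ls ms)

/-- `S ∈ ZF^{n,m}` : `S` is zero-filiform with `dim L₀ = n`, `dim L₁ = m`. -/
def ZeroFiliform (n m : ℕ) : Prop :=
  Module.finrank ℂ S.L0 = n ∧ Module.finrank ℂ S.L1 = m ∧ S.HasCharSeq [n] [m]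

/-- A graded subalgebra: a submodule closed under the bracket which is the sum of
its intersections with the even and the odd parts. -/
def IsGradedSubalgebra (p : Submodule ℂ L) : Prop :=
  (∀ a ∈ p, ∀ b ∈ p, S.bracket a b ∈ p) ∧ p = p ⊓ S.L0 ⊔ p ⊓ S.L1

/-- `A` generates the superalgebra: the smallest graded subalgebra containing `A` is `L`. -/
def Generates (A : Set L) : Prop :=
  ∀ p : Submodule ℂ L, S.IsGradedSubalgebra p → A ⊆ p → p = ⊤

/-- An adapted basis `{x₁,…,x_n, y₁,…,y_m}` of a zero-filiform Leibniz superalgebra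
(1-based indexing). -/
def IsAdaptedPair (n m : ℕ) (x y : ℕ → L) : Prop :=
  (∀ i, 1 ≤ i → i ≤ n → x i ∈ S.L0) ∧
  (∀ j, 1 ≤ j → j ≤ m → y j ∈ S.L1) ∧
  LinearIndependent ℂ
    (Sum.elim (fun i : Fin n => x ((i : ℕ) + 1)) (fun j : Fin m => y ((j : ℕ) + 1))) ∧
  Submodule.span ℂ (Set.range
    (Sum.elim (fun i : Fin n => x ((i : ℕ) + 1)) (fun j : Fin m => y ((j : ℕ) + 1)))) = ⊤ ∧
  (∀ i, 1 ≤ i → i ≤ n - 1 → S.bracket (x i) (x 1) = x (i + 1)) ∧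
  S.bracket (x n) (x 1) = 0 ∧
  (∀ i k, 1 ≤ i → i ≤ n → 2 ≤ k → k ≤ n → S.bracket (x i) (x k) = 0) ∧
  (∀ j, 1 ≤ j → j ≤ m - 1 → S.bracket (y j) (x 1) = y (j + 1)) ∧
  S.bracket (y m) (x 1) = 0 ∧
  (∀ j k, 1 ≤ j → j ≤ m → 2 ≤ k → k ≤ n → S.bracket (y j) (x k) = 0)

end LeibnizSuper

/-!
The square `L²` always contains `x₂, …, x_n, y₂, …, y_m`, and the nilindex forces `x₁, y₁ ∉ L²`.
Since `[L^k, L²] ⊆ L^{k+2}`, if `L = ℂ e + L²` then `L^{k+1} = R_e^k L`.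
For `e = x₁` this gives `L^{n+m-1} = 0`, because `R_{x₁}^{max n m} = 0`. For `e = y₁`, the Leibniz
superidentity gives `2 R_{y₁}² = c R_{x₁}`, where `c` is the `x₁`-coordinate of `[y₁, y₁]`; then
`L³ = 0` if `c = 0`, and otherwise `R_{y₁}^{2m-2} y₁ = (c/2)^{m-1} y_m` (if `n < m`) or
`R_{y₁}^{2n-1} y₁ = (c/2)^{n-1} c x_n` (if `m ≤ n`) is a nonzero element of `L^{n+m} = 0`.

Hence `L² ∩ L₀ = ⟨x₂, …⟩` and `L² ∩ L₁ = ⟨y₂, …⟩`, so `L³ ⊆ ⟨x₂, …, x_n, y₃, …, y_m⟩` comes down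
to `[x_i, y_j]` having no `y₂`-component `θ` for `i ≥ 2`. The identity
`θ[a, y_{j+1}] = (-1)^j θ[R_{x₁}^j a, y₁]` and the vanishing of `[z, [x_k, y₁]]` for `k ≥ 2`
give `θ[x_k, y₁]² = 0` by descending induction on `k`. Equality then follows by counting
dimensions, as the central series strictly decreases until `L^{n+m} = 0`.
-/

section Chain

variable {R M : Type*} [Semiring R] [AddCommMonoid M] [Module R M] {f : M →ₗ[R] M}
  {v : ℕ → M} {N : ℕ}

theorem pow_apply_eq_of_shift (hstep : ∀ i, 1 ≤ i → i < N → f (v i) = v (i + 1)) {i k : ℕ}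
    (hi : 1 ≤ i) (hik : i + k ≤ N) : (f ^ k) (v i) = v (i + k) := by
  induction k with
  | zero => rfl
  | succ k ih => rw [pow_succ', Module.End.mul_apply, ih (by omega), hstep _ (by omega) (by omega),
      add_assoc]

theorem map_span_image_Icc_le_of_shift (hstep : ∀ i, 1 ≤ i → i < N → f (v i) = v (i + 1))
    (hlast : f (v N) = 0) {a : ℕ} (ha : 1 ≤ a) :
    (Submodule.span R (v '' Set.Icc a N)).map f ≤ Submodule.span R (v '' Set.Icc (a + 1) N) := by
  rw [Submodule.map_span, Submodule.span_le]
  rintro _ ⟨_, ⟨i, ⟨hai, hiN⟩, rfl⟩, rfl⟩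
  rcases hiN.lt_or_eq with hlt | rfl
  · rw [hstep i (by omega) hlt]
    exact Submodule.subset_span ⟨i + 1, ⟨by omega, by omega⟩, rfl⟩
  · rw [hlast]
    exact zero_mem _

theorem map_pow_span_image_Icc_le_of_shift (hstep : ∀ i, 1 ≤ i → i < N → f (v i) = v (i + 1))
    (hlast : f (v N) = 0) {a : ℕ} (ha : 1 ≤ a) (k : ℕ) :
    (Submodule.span R (v '' Set.Icc a N)).map (f ^ k) ≤
      Submodule.span R (v '' Set.Icc (a + k) N) := by
  induction k with
  | zero => rw [pow_zero, Module.End.one_eq_id, Submodule.map_id, add_zero]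
  | succ k ih =>
    rw [pow_succ', Module.End.mul_eq_comp, Submodule.map_comp, ← add_assoc]
    exact (Submodule.map_mono ih).trans (map_span_image_Icc_le_of_shift hstep hlast (by omega))

end Chain

theorem range_fin_add_one_eq_image_Icc {α : Type*} (f : ℕ → α) (k : ℕ) :
    Set.range (fun i : Fin k => f (i + 1)) = f '' Set.Icc 1 k := by
  ext z
  constructor
  · rintro ⟨i, rfl⟩
    exact ⟨i + 1, ⟨by omega, by omega⟩, rfl⟩
  · rintro ⟨i, ⟨hi, hik⟩, rfl⟩
    exact ⟨⟨i - 1, by omega⟩, by simp only; congr; omega⟩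

theorem image_Icc_eq_insert {α : Type*} (f : ℕ → α) {a b : ℕ} (hab : a ≤ b) :
    f '' Set.Icc a b = insert (f a) (f '' Set.Icc (a + 1) b) := by
  rw [← Set.insert_Icc_add_one_left_eq_Icc hab, Set.image_insert_eq]

theorem eq_of_sup_eq_top_of_disjoint {α : Type*} [Lattice α] [BoundedOrder α] [IsModularLattice α]
    {a b p q : α} (hap : a ≤ p) (hbq : b ≤ q) (hab : a ⊔ b = ⊤) (hpq : Disjoint p q) : a = p := by
  refine le_antisymm hap ?_
  calc p = (a ⊔ b) ⊓ p := by rw [hab, top_inf_eq]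
    _ ≤ (a ⊔ q) ⊓ p := inf_le_inf_right _ (sup_le_sup_left hbq _)
    _ = a ⊔ q ⊓ p := sup_inf_assoc_of_le q hap
    _ = a := by rw [hpq.symm.eq_bot, sup_bot_eq]

theorem Submodule.mem_span_of_mem_span_insert {K M : Type*} [DivisionRing K] [AddCommGroup M]
    [Module K M] {T : Submodule K M} {s : Set M} {v w : M} (hw : w ∈ T)
    (hws : w ∈ span K (insert v s)) (hs : span K s ≤ T) (hv : v ∉ T) : w ∈ span K s := by
  obtain ⟨r, u, hu, rfl⟩ := mem_span_insert.mp hws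
  rcases eq_or_ne r 0 with rfl | hr
  · simpa using hu
  · exact absurd ((T.smul_mem_iff hr).mp (by simpa using T.sub_mem hw (hs hu))) hv

theorem finrank_span_image_Icc_union_le {M : Type*} [AddCommGroup M] [Module ℂ M]
    {x y : ℕ → M} {n m : ℕ} (hn : 1 ≤ n) (hm : 2 ≤ m) :
    Module.finrank ℂ (Submodule.span ℂ (x '' Set.Icc 2 n ∪ y '' Set.Icc 3 m)) ≤ n + m - 3 := by
  classical
  have hset : x '' Set.Icc 2 n ∪ y '' Set.Icc 3 m =
      ↑((Finset.Icc 2 n).image x ∪ (Finset.Icc 3 m).image y) := by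
    simp [Finset.coe_union, Finset.coe_image, Finset.coe_Icc]
  rw [hset]
  refine (finrank_span_finset_le_card _).trans ((Finset.card_union_le _ _).trans ?_)
  have := (Finset.Icc 2 n).card_image_le (f := x)
  have := (Finset.Icc 3 m).card_image_le (f := y)
  simp only [Nat.card_Icc] at *
  omega

namespace LeibnizSuper

variable {L : Type*} [AddCommGroup L] [Module ℂ L] (S : LeibnizSuper L)

def IsHomogeneous (v : L) : Prop := v ∈ S.L0 ∨ v ∈ S.L1

theorem exists_add_eq (v : L) : ∃ v₀ ∈ S.L0, ∃ v₁ ∈ S.L1, v₀ + v₁ = v :=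
  Submodule.mem_sup.mp (S.compl.sup_eq_top ▸ Submodule.mem_top)

theorem bracket_mem_of_isHomogeneous {P : Submodule ℂ L}
    (h : ∀ a b, S.IsHomogeneous a → S.IsHomogeneous b → S.bracket a b ∈ P) (a b : L) :
    S.bracket a b ∈ P := by
  obtain ⟨a₀, ha₀, a₁, ha₁, rfl⟩ := S.exists_add_eq a
  obtain ⟨b₀, hb₀, b₁, hb₁, rfl⟩ := S.exists_add_eq b
  simp only [map_add, LinearMap.add_apply]
  repeat' apply add_mem
  all_goals apply h <;> first | exact .inl ‹_› | exact .inr ‹_›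

theorem term_succ (k : ℕ) : S.term (k + 1) = Submodule.map₂ S.bracket (S.term k) ⊤ := by
  rw [Submodule.map₂_eq_span_image2, term, bracketSpan]
  congr 1
  ext z
  simp [Set.mem_image2, eq_comm]

theorem bracket_mem_term {k : ℕ} {a : L} (ha : a ∈ S.term k) (b : L) :
    S.bracket a b ∈ S.term (k + 1) :=
  S.term_succ k ▸ Submodule.apply_mem_map₂ _ ha Submodule.mem_top

theorem map_R_le_term_succ (e : L) (k : ℕ) : (S.term k).map (S.R e) ≤ S.term (k + 1) := by
  rintro _ ⟨a, ha, rfl⟩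
  exact S.bracket_mem_term ha e

theorem term_antitone : Antitone S.term := by
  refine antitone_nat_of_succ_le fun k => ?_
  induction k with
  | zero => exact le_top
  | succ k ih =>
    exact (S.term_succ (k + 1)).le.trans ((Submodule.map₂_le_map₂_left ih).trans (S.term_succ k).ge)

theorem pow_R_apply_mem_term (e z : L) (k : ℕ) : (S.R e ^ k) z ∈ S.term k := by
  induction k with
  | zero => exact Submodule.mem_top
  | succ k ih => rw [pow_succ', Module.End.mul_apply]; exact S.bracket_mem_term ih e

theorem isHomogeneous_bracket {a b : L} (ha : S.IsHomogeneous a) (hb : S.IsHomogeneous b) :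
    S.IsHomogeneous (S.bracket a b) := by
  rcases ha with ha | ha <;> rcases hb with hb | hb
  exacts [.inl (S.g00 a ha b hb), .inr (S.g01 a ha b hb), .inr (S.g10 a ha b hb),
    .inl (S.g11 a ha b hb)]

theorem term_one_le_sup_inf : S.term 1 ≤ S.term 1 ⊓ S.L0 ⊔ S.term 1 ⊓ S.L1 := by
  refine (S.term_succ 0).le.trans (Submodule.map₂_le.mpr fun a _ b _ => ?_)
  refine S.bracket_mem_of_isHomogeneous (fun a b ha hb => ?_) a b
  have hab := S.bracket_mem_term (k := 0) Submodule.mem_top (a := a) b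
  rcases S.isHomogeneous_bracket ha hb with h | h
  exacts [Submodule.mem_sup_left ⟨hab, h⟩, Submodule.mem_sup_right ⟨hab, h⟩]

theorem bracket_bracket_mem_term {k : ℕ} {a b c : L} (ha : a ∈ S.term k)
    (hb : S.IsHomogeneous b) (hc : S.IsHomogeneous c) :
    S.bracket a (S.bracket b c) ∈ S.term (k + 2) := by
  have hbc := S.bracket_mem_term (S.bracket_mem_term ha b) c
  have hcb := S.bracket_mem_term (S.bracket_mem_term ha c) b
  rcases hb with hb | hb <;> rcases hc with hc | hc
  · rw [S.leib00 a b hb c hc]; exact sub_mem hbc hcb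
  · rw [S.leib01 a b hb c hc]; exact sub_mem hbc hcb
  · rw [S.leib10 a b hb c hc]; exact sub_mem hbc hcb
  · rw [S.leib11 a b hb c hc]; exact add_mem hbc hcb

theorem bracket_mem_term_add_two {k : ℕ} {a w : L} (ha : a ∈ S.term k) (hw : w ∈ S.term 1) :
    S.bracket a w ∈ S.term (k + 2) := by
  have : S.term 1 ≤ (S.term (k + 2)).comap (S.bracket a) :=
    (S.term_succ 0).le.trans <| Submodule.map₂_le.mpr fun b _ c _ =>
      S.bracket_mem_of_isHomogeneous (fun b c hb hc => S.bracket_bracket_mem_term ha hb hc) b c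
  exact this hw

theorem term_succ_le_map_sup {e : L} (he : (ℂ ∙ e) ⊔ S.term 1 = ⊤) (k : ℕ) :
    S.term (k + 1) ≤ (S.term k).map (S.R e) ⊔ S.term (k + 2) := by
  refine (S.term_succ k).le.trans (Submodule.map₂_le.mpr fun a ha b _ => ?_)
  obtain ⟨_, hr, w, hw, rfl⟩ := Submodule.mem_sup.mp (he ▸ Submodule.mem_top : b ∈ _)
  obtain ⟨r, rfl⟩ := Submodule.mem_span_singleton.mp hr
  rw [map_add, map_smul]
  exact add_mem (Submodule.mem_sup_left (Submodule.smul_mem _ r ⟨a, ha, rfl⟩))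
    (Submodule.mem_sup_right (S.bracket_mem_term_add_two ha hw))

theorem term_succ_eq_map {e : L} (he : (ℂ ∙ e) ⊔ S.term 1 = ⊤) {N : ℕ} (hN : S.term N = ⊥)
    (k : ℕ) : S.term (k + 1) = (S.term k).map (S.R e) := by
  refine le_antisymm ?_ (S.map_R_le_term_succ e k)
  have key : ∀ d, S.term (k + 1) ≤ (S.term k).map (S.R e) ⊔ S.term (k + d + 1) := by
    intro d
    induction d with
    | zero => exact le_sup_right
    | succ d ih =>
      refine ih.trans (sup_le le_sup_left ((S.term_succ_le_map_sup he (k + d)).trans ?_))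
      exact sup_le_sup_right (Submodule.map_mono (S.term_antitone (by omega))) _
  have hbot : S.term (k + N + 1) = ⊥ := le_bot_iff.mp ((S.term_antitone (by omega)).trans hN.le)
  simpa [hbot] using key N

theorem term_eq_map_pow {e : L} (he : (ℂ ∙ e) ⊔ S.term 1 = ⊤) {N : ℕ} (hN : S.term N = ⊥)
    (k : ℕ) : S.term k = (⊤ : Submodule ℂ L).map (S.R e ^ k) := by
  induction k with
  | zero => rw [pow_zero, Module.End.one_eq_id, Submodule.map_id]; rfl
  | succ k ih => rw [S.term_succ_eq_map he hN, ih, pow_succ', Module.End.mul_eq_comp,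
      Submodule.map_comp]

theorem two_smul_R_R {e : L} (he : e ∈ S.L1) (z : L) :
    (2 : ℂ) • S.R e (S.R e z) = S.bracket z (S.bracket e e) := by
  rw [S.leib11 z e he e he, two_smul]
  rfl

theorem term_add_eq_of_term_succ_eq {k : ℕ} (h : S.term (k + 1) = S.term k) (d : ℕ) :
    S.term (k + d) = S.term k := by
  induction d with
  | zero => rfl
  | succ d ih => rw [← add_assoc, term_succ, ih, ← term_succ, h]

namespace HasNilindex

variable {S} {s : ℕ}

theorem term_ne_bot (hs : S.HasNilindex s) {k : ℕ} (hk : k + 1 < s) : S.term k ≠ ⊥ :=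
  hs.2.2 k hk

theorem pow_R_eq_zero (hs : S.HasNilindex s) (e : L) : S.R e ^ (s - 1) = 0 :=
  LinearMap.ext fun z => by simpa [hs.2.1] using S.pow_R_apply_mem_term e z (s - 1)

theorem term_succ_lt (hs : S.HasNilindex s) {k : ℕ} (hk : k + 2 ≤ s) :
    S.term (k + 1) < S.term k := by
  refine lt_of_le_of_ne (S.term_antitone k.le_succ) fun h => hs.term_ne_bot (k := k) (by omega) ?_
  rw [← S.term_add_eq_of_term_succ_eq h (s - 1 - k), show k + (s - 1 - k) = s - 1 by omega]
  exact hs.2.1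

theorem le_finrank_term [FiniteDimensional ℂ L] (hs : S.HasNilindex s) {k : ℕ} (hk : k < s) :
    s - 1 - k ≤ Module.finrank ℂ (S.term k) := by
  induction h : s - 1 - k generalizing k with
  | zero => exact Nat.zero_le _
  | succ d ih =>
    have := Submodule.finrank_lt_finrank_of_lt (hs.term_succ_lt (k := k) (by omega))
    have := ih (k := k + 1) (by omega) (by omega)
    omega

end HasNilindex

end LeibnizSuper

namespace LeibnizSuper.IsAdaptedPair

open Submodule Set

variable {L : Type*} [AddCommGroup L] [Module ℂ L] {S : LeibnizSuper L} {n m : ℕ}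
  {x y : ℕ → L}

theorem x_mem (h : S.IsAdaptedPair n m x y) {i : ℕ} (hi : 1 ≤ i) (hin : i ≤ n) : x i ∈ S.L0 :=
  h.1 i hi hin

theorem y_mem (h : S.IsAdaptedPair n m x y) {j : ℕ} (hj : 1 ≤ j) (hjm : j ≤ m) : y j ∈ S.L1 :=
  h.2.1 j hj hjm

theorem R_x_one_x (h : S.IsAdaptedPair n m x y) {i : ℕ} (hi : 1 ≤ i) (hin : i < n) :
    S.R (x 1) (x i) = x (i + 1) :=
  h.2.2.2.2.1 i hi (by omega)

theorem R_x_one_x_last (h : S.IsAdaptedPair n m x y) : S.R (x 1) (x n) = 0 :=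
  h.2.2.2.2.2.1

theorem R_x_one_y (h : S.IsAdaptedPair n m x y) {j : ℕ} (hj : 1 ≤ j) (hjm : j < m) :
    S.R (x 1) (y j) = y (j + 1) :=
  h.2.2.2.2.2.2.2.1 j hj (by omega)

theorem R_x_one_y_last (h : S.IsAdaptedPair n m x y) : S.R (x 1) (y m) = 0 :=
  h.2.2.2.2.2.2.2.2.1

theorem span_eq_top (h : S.IsAdaptedPair n m x y) :
    span ℂ (x '' Icc 1 n ∪ y '' Icc 1 m) = ⊤ := by
  rw [← h.2.2.2.1, Sum.elim_range, range_fin_add_one_eq_image_Icc,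
    range_fin_add_one_eq_image_Icc]

theorem R_x_eq_zero (h : S.IsAdaptedPair n m x y) {k : ℕ} (hk : 2 ≤ k) (hkn : k ≤ n) :
    S.R (x k) = 0 := by
  refine LinearMap.ext_on h.span_eq_top ?_
  rintro _ (⟨i, ⟨hi, hin⟩, rfl⟩ | ⟨j, ⟨hj, hjm⟩, rfl⟩)
  exacts [h.2.2.2.2.2.2.1 i k hi hin hk hkn, h.2.2.2.2.2.2.2.2.2 j k hj hjm hk hkn]

theorem R_eq_zero_of_mem (h : S.IsAdaptedPair n m x y) {u : L} (hu : u ∈ span ℂ (x '' Icc 2 n)) :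
    S.R u = 0 := by
  have : span ℂ (x '' Icc 2 n) ≤ LinearMap.ker S.bracket.flip := by
    rw [span_le]
    rintro _ ⟨k, ⟨hk, hkn⟩, rfl⟩
    exact h.R_x_eq_zero hk hkn
  exact this hu

theorem span_x_eq_L0 (h : S.IsAdaptedPair n m x y) : span ℂ (x '' Icc 1 n) = S.L0 := by
  refine eq_of_sup_eq_top_of_disjoint (b := span ℂ (y '' Icc 1 m)) (q := S.L1) ?_ ?_ ?_
    S.compl.disjoint
  · exact span_le.mpr (by rintro _ ⟨i, ⟨hi, hin⟩, rfl⟩; exact h.x_mem hi hin)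
  · exact span_le.mpr (by rintro _ ⟨j, ⟨hj, hjm⟩, rfl⟩; exact h.y_mem hj hjm)
  · rw [← span_union, h.span_eq_top]

theorem span_y_eq_L1 (h : S.IsAdaptedPair n m x y) : span ℂ (y '' Icc 1 m) = S.L1 := by
  refine eq_of_sup_eq_top_of_disjoint (b := span ℂ (x '' Icc 1 n)) (q := S.L0) ?_ ?_ ?_
    S.compl.disjoint.symm
  · exact span_le.mpr (by rintro _ ⟨j, ⟨hj, hjm⟩, rfl⟩; exact h.y_mem hj hjm)
  · exact span_le.mpr (by rintro _ ⟨i, ⟨hi, hin⟩, rfl⟩; exact h.x_mem hi hin)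
  · rw [← span_union, union_comm, h.span_eq_top]

theorem map_R_x_one_span_x (h : S.IsAdaptedPair n m x y) {a : ℕ} (ha : 1 ≤ a) :
    (span ℂ (x '' Icc a n)).map (S.R (x 1)) ≤ span ℂ (x '' Icc (a + 1) n) :=
  map_span_image_Icc_le_of_shift (fun _ => h.R_x_one_x) h.R_x_one_x_last ha

theorem map_R_x_one_span_y (h : S.IsAdaptedPair n m x y) {a : ℕ} (ha : 1 ≤ a) :
    (span ℂ (y '' Icc a m)).map (S.R (x 1)) ≤ span ℂ (y '' Icc (a + 1) m) :=
  map_span_image_Icc_le_of_shift (fun _ => h.R_x_one_y) h.R_x_one_y_last ha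

theorem map_pow_R_x_one_span_x (h : S.IsAdaptedPair n m x y) {a : ℕ} (ha : 1 ≤ a) (k : ℕ) :
    (span ℂ (x '' Icc a n)).map (S.R (x 1) ^ k) ≤ span ℂ (x '' Icc (a + k) n) :=
  map_pow_span_image_Icc_le_of_shift (fun _ => h.R_x_one_x) h.R_x_one_x_last ha k

theorem map_pow_R_x_one_span_y (h : S.IsAdaptedPair n m x y) {a : ℕ} (ha : 1 ≤ a) (k : ℕ) :
    (span ℂ (y '' Icc a m)).map (S.R (x 1) ^ k) ≤ span ℂ (y '' Icc (a + k) m) :=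
  map_pow_span_image_Icc_le_of_shift (fun _ => h.R_x_one_y) h.R_x_one_y_last ha k

theorem span_x_le_term_one (h : S.IsAdaptedPair n m x y) : span ℂ (x '' Icc 2 n) ≤ S.term 1 := by
  rw [span_le]
  rintro _ ⟨i, ⟨hi, hin⟩, rfl⟩
  rw [show i = i - 1 + 1 by omega, ← h.R_x_one_x (by omega) (by omega)]
  exact S.bracket_mem_term (k := 0) mem_top _

theorem span_y_le_term_one (h : S.IsAdaptedPair n m x y) : span ℂ (y '' Icc 2 m) ≤ S.term 1 := by
  rw [span_le]
  rintro _ ⟨j, ⟨hj, hjm⟩, rfl⟩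
  rw [show j = j - 1 + 1 by omega, ← h.R_x_one_y (by omega) (by omega)]
  exact S.bracket_mem_term (k := 0) mem_top _

theorem map_pow_R_x_one_span_x_eq_bot (h : S.IsAdaptedPair n m x y) {a k : ℕ} (ha : 1 ≤ a)
    (hk : n < a + k) : (span ℂ (x '' Icc a n)).map (S.R (x 1) ^ k) = ⊥ := by
  simpa [Icc_eq_empty_of_lt hk] using h.map_pow_R_x_one_span_x ha k

theorem map_pow_R_x_one_span_y_eq_bot (h : S.IsAdaptedPair n m x y) {a k : ℕ} (ha : 1 ≤ a)
    (hk : m < a + k) : (span ℂ (y '' Icc a m)).map (S.R (x 1) ^ k) = ⊥ := by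
  simpa [Icc_eq_empty_of_lt hk] using h.map_pow_R_x_one_span_y ha k

theorem pow_R_x_one_eq_zero (h : S.IsAdaptedPair n m x y) {k : ℕ} (hn : n ≤ k) (hm : m ≤ k) :
    S.R (x 1) ^ k = 0 := by
  rw [← LinearMap.range_eq_bot, ← Submodule.map_top, ← h.span_eq_top, span_union, Submodule.map_sup,
    h.map_pow_R_x_one_span_x_eq_bot le_rfl (by omega),
    h.map_pow_R_x_one_span_y_eq_bot le_rfl (by omega), sup_bot_eq]

theorem x_ne_zero (h : S.IsAdaptedPair n m x y) {i : ℕ} (hi : 1 ≤ i) (hin : i ≤ n) : x i ≠ 0 := by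
  simpa [show i - 1 + 1 = i by omega] using h.2.2.1.ne_zero (.inl ⟨i - 1, by omega⟩)

theorem y_ne_zero (h : S.IsAdaptedPair n m x y) {j : ℕ} (hj : 1 ≤ j) (hjm : j ≤ m) : y j ≠ 0 := by
  simpa [show j - 1 + 1 = j by omega] using h.2.2.1.ne_zero (.inr ⟨j - 1, by omega⟩)

theorem y_two_notMem_span (h : S.IsAdaptedPair n m x y) (hm : 2 ≤ m) :
    y 2 ∉ span ℂ (x '' Icc 2 n ∪ y '' Icc 3 m) := by
  have := h.2.2.1.notMem_span_image (s := {.inr ⟨1, hm⟩}ᶜ) (x := .inr ⟨1, hm⟩) (by simp)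
  refine fun hy => this (span_mono ?_ hy)
  rintro _ (⟨i, ⟨hi, hin⟩, rfl⟩ | ⟨j, ⟨hj, hjm⟩, rfl⟩)
  · exact ⟨.inl ⟨i - 1, by omega⟩, by simp, by simp [show i - 1 + 1 = i by omega]⟩
  · refine ⟨.inr ⟨j - 1, by omega⟩, by simp; omega, by simp [show j - 1 + 1 = j by omega]⟩

theorem sup_span_eq_top (h : S.IsAdaptedPair n m x y) (hn : 1 ≤ n) (hm : 1 ≤ m) :
    (ℂ ∙ x 1) ⊔ span ℂ (x '' Icc 2 n) ⊔ ((ℂ ∙ y 1) ⊔ span ℂ (y '' Icc 2 m)) = ⊤ := by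
  rw [← span_insert, ← span_insert, ← image_Icc_eq_insert x hn, ← image_Icc_eq_insert y hm,
    ← span_union, h.span_eq_top]

theorem span_y_one_sup_term_one (h : S.IsAdaptedPair n m x y) (hn : 1 ≤ n) (hm : 1 ≤ m)
    (hx1 : x 1 ∈ S.term 1) : (ℂ ∙ y 1) ⊔ S.term 1 = ⊤ := by
  refine eq_top_iff.mpr ((h.sup_span_eq_top hn hm).ge.trans (sup_le (sup_le ?_ ?_) (sup_le ?_ ?_)))
  · exact le_sup_of_le_right ((span_singleton_le_iff_mem _ _).mpr hx1)
  · exact le_sup_of_le_right h.span_x_le_term_one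
  · exact le_sup_left
  · exact le_sup_of_le_right h.span_y_le_term_one

theorem span_x_one_sup_term_one (h : S.IsAdaptedPair n m x y) (hn : 1 ≤ n) (hm : 1 ≤ m)
    (hy1 : y 1 ∈ S.term 1) : (ℂ ∙ x 1) ⊔ S.term 1 = ⊤ := by
  refine eq_top_iff.mpr ((h.sup_span_eq_top hn hm).ge.trans (sup_le (sup_le ?_ ?_) (sup_le ?_ ?_)))
  · exact le_sup_left
  · exact le_sup_of_le_right h.span_x_le_term_one
  · exact le_sup_of_le_right ((span_singleton_le_iff_mem _ _).mpr hy1)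
  · exact le_sup_of_le_right h.span_y_le_term_one

theorem y_one_notMem_term_one (h : S.IsAdaptedPair n m x y) (hn : 2 ≤ n) (hm : 2 ≤ m)
    (hnil : S.HasNilindex (n + m)) : y 1 ∉ S.term 1 := by
  intro hy1
  apply hnil.term_ne_bot (k := n + m - 2) (by omega)
  rw [S.term_eq_map_pow (h.span_x_one_sup_term_one (by omega) (by omega) hy1) hnil.2.1,
    h.pow_R_x_one_eq_zero (by omega) (by omega), Submodule.map_zero]

theorem exists_bracket_y_one_y_one (h : S.IsAdaptedPair n m x y) (hn : 1 ≤ n) (hm : 1 ≤ m) :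
    ∃ c : ℂ, ∃ u ∈ span ℂ (x '' Icc 2 n), S.bracket (y 1) (y 1) = c • x 1 + u := by
  have := S.g11 _ (h.y_mem le_rfl hm) _ (h.y_mem le_rfl hm)
  rwa [← h.span_x_eq_L0, image_Icc_eq_insert x hn, mem_span_insert] at this

theorem R_y_one_sq (h : S.IsAdaptedPair n m x y) (hm : 1 ≤ m) {c : ℂ} {u : L}
    (hu : u ∈ span ℂ (x '' Icc 2 n)) (hc : S.bracket (y 1) (y 1) = c • x 1 + u) :
    S.R (y 1) ^ 2 = (c / 2) • S.R (x 1) := by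
  ext z
  have h2 := S.two_smul_R_R (h.y_mem le_rfl hm) z
  have hzu : S.bracket z u = 0 := LinearMap.congr_fun (h.R_eq_zero_of_mem hu) z
  rw [hc, map_add, map_smul, hzu, add_zero] at h2
  rw [pow_two, Module.End.mul_apply, LinearMap.smul_apply, div_eq_inv_mul, mul_smul]
  exact (eq_inv_smul_iff₀ (two_ne_zero : (2 : ℂ) ≠ 0)).mpr h2

theorem pow_R_y_one_ne_zero (h : S.IsAdaptedPair n m x y) (hn : 1 ≤ n) (hm : 1 ≤ m) {c : ℂ}
    {u : L} (hu : u ∈ span ℂ (x '' Icc 2 n)) (hc : S.bracket (y 1) (y 1) = c • x 1 + u)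
    (hc0 : c ≠ 0) : S.R (y 1) ^ (n + m - 1) ≠ 0 := by
  have hpow (k : ℕ) : S.R (y 1) ^ (2 * k) = (c / 2) ^ k • S.R (x 1) ^ k := by
    rw [pow_mul, h.R_y_one_sq hm hu hc, smul_pow]
  have hck (k : ℕ) : (c / 2) ^ k ≠ 0 := pow_ne_zero _ (div_ne_zero hc0 two_ne_zero)
  intro hzero
  rcases lt_or_ge n m with hnm | hmn
  · have := LinearMap.congr_fun (pow_eq_zero_of_le (show n + m - 1 ≤ 2 * (m - 1) by omega) hzero)
      (y 1)
    rw [hpow, LinearMap.smul_apply, pow_apply_eq_of_shift (fun _ => h.R_x_one_y) le_rfl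
      (by omega), show 1 + (m - 1) = m by omega] at this
    exact h.y_ne_zero (by omega) le_rfl ((smul_eq_zero.mp this).resolve_left (hck _))
  · have := LinearMap.congr_fun
      (pow_eq_zero_of_le (show n + m - 1 ≤ 2 * (n - 1) + 1 by omega) hzero) (y 1)
    have hu0 := mem_map_of_mem (f := S.R (x 1) ^ (n - 1)) hu
    rw [h.map_pow_R_x_one_span_x_eq_bot (a := 2) (by omega) (by omega), mem_bot] at hu0
    rw [pow_succ, Module.End.mul_apply, hpow, LinearMap.smul_apply] at this
    change (c / 2) ^ (n - 1) • (S.R (x 1) ^ (n - 1)) (S.bracket (y 1) (y 1)) = 0 at this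
    rw [hc, map_add, map_smul, hu0, add_zero, pow_apply_eq_of_shift (fun _ => h.R_x_one_x) le_rfl
      (by omega), show 1 + (n - 1) = n by omega, smul_smul] at this
    exact h.x_ne_zero (by omega) le_rfl
      ((smul_eq_zero.mp this).resolve_left (mul_ne_zero (hck _) hc0))

theorem x_one_notMem_term_one (h : S.IsAdaptedPair n m x y) (hn : 2 ≤ n) (hm : 2 ≤ m)
    (hnil : S.HasNilindex (n + m)) : x 1 ∉ S.term 1 := by
  intro hx1
  obtain ⟨c, u, hu, hc⟩ := h.exists_bracket_y_one_y_one (by omega) (by omega)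
  rcases eq_or_ne c 0 with rfl | hc0
  · apply hnil.term_ne_bot (k := 2) (by omega)
    rw [S.term_eq_map_pow (h.span_y_one_sup_term_one (by omega) (by omega) hx1) hnil.2.1,
      h.R_y_one_sq (by omega) hu hc, zero_div, zero_smul, Submodule.map_zero]
  · exact h.pow_R_y_one_ne_zero (by omega) (by omega) hu hc hc0 (hnil.pow_R_eq_zero (y 1))

theorem term_one_inf_L0_le (h : S.IsAdaptedPair n m x y) (hn : 1 ≤ n) (hx1 : x 1 ∉ S.term 1) :
    S.term 1 ⊓ S.L0 ≤ span ℂ (x '' Icc 2 n) := by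
  rintro w ⟨hw, hw0⟩
  rw [← h.span_x_eq_L0, image_Icc_eq_insert x hn] at hw0
  exact mem_span_of_mem_span_insert hw hw0 h.span_x_le_term_one hx1

theorem term_one_inf_L1_le (h : S.IsAdaptedPair n m x y) (hm : 1 ≤ m) (hy1 : y 1 ∉ S.term 1) :
    S.term 1 ⊓ S.L1 ≤ span ℂ (y '' Icc 2 m) := by
  rintro w ⟨hw, hw1⟩
  rw [← h.span_y_eq_L1, image_Icc_eq_insert y hm] at hw1
  exact mem_span_of_mem_span_insert hw hw1 h.span_y_le_term_one hy1

theorem term_one_le_span (h : S.IsAdaptedPair n m x y) (hn : 1 ≤ n) (hm : 1 ≤ m)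
    (hx1 : x 1 ∉ S.term 1) (hy1 : y 1 ∉ S.term 1) :
    S.term 1 ≤ span ℂ (x '' Icc 2 n ∪ y '' Icc 2 m) := by
  rw [span_union]
  exact S.term_one_le_sup_inf.trans
    (sup_le_sup (h.term_one_inf_L0_le hn hx1) (h.term_one_inf_L1_le hm hy1))

theorem bracket_mem_span_y (h : S.IsAdaptedPair n m x y) (hm : 1 ≤ m) (hy1 : y 1 ∉ S.term 1)
    {a b : L} (ha : a ∈ S.L0) (hb : b ∈ S.L1) : S.bracket a b ∈ span ℂ (y '' Icc 2 m) :=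
  h.term_one_inf_L1_le hm hy1 ⟨S.bracket_mem_term (k := 0) mem_top b, S.g01 a ha b hb⟩

theorem pow_R_x_one_mem_span (h : S.IsAdaptedPair n m x y) {a : L} (ha : a ∈ S.L0) {k : ℕ}
    (hk : 1 ≤ k) : (S.R (x 1) ^ k) a ∈ span ℂ (x '' Icc 2 n) := by
  rw [← h.span_x_eq_L0] at ha
  exact span_mono (image_mono (Icc_subset_Icc_left (by omega)))
    (h.map_pow_R_x_one_span_x le_rfl k (mem_map_of_mem ha))

theorem pow_R_x_one_mem_L0 (h : S.IsAdaptedPair n m x y) {a : L} (ha : a ∈ S.L0) (k : ℕ) :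
    (S.R (x 1) ^ k) a ∈ S.L0 := by
  rw [← h.span_x_eq_L0] at ha ⊢
  exact span_mono (image_mono (Icc_subset_Icc_left (by omega)))
    (h.map_pow_R_x_one_span_x le_rfl k (mem_map_of_mem ha))

theorem bracket_bracket_y_one_eq_zero (h : S.IsAdaptedPair n m x y) (hm : 1 ≤ m) {b : L}
    (hb : b ∈ span ℂ (x '' Icc 2 n)) (z : L) : S.bracket z (S.bracket b (y 1)) = 0 := by
  have hb0 : b ∈ S.L0 :=
    h.span_x_eq_L0 ▸ span_mono (image_mono (Icc_subset_Icc_left one_le_two)) hb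
  have hRb (w : L) : S.bracket w b = 0 := LinearMap.congr_fun (h.R_eq_zero_of_mem hb) w
  rw [S.leib01 z b hb0 (y 1) (h.y_mem le_rfl hm), hRb, hRb, map_zero, LinearMap.zero_apply,
    sub_zero]

section

variable {θ : Module.Dual ℂ L}

theorem apply_bracket_y_succ (h : S.IsAdaptedPair n m x y) (hn : 1 ≤ n) (hm : 1 ≤ m)
    (hy1 : y 1 ∉ S.term 1) (hθ : span ℂ (y '' Icc 3 m) ≤ LinearMap.ker θ) {a : L}
    (ha : a ∈ S.L0) {j : ℕ} (hj : 1 ≤ j) (hjm : j < m) :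
    θ (S.bracket a (y (j + 1))) = -θ (S.bracket (S.R (x 1) a) (y j)) := by
  have hyj := h.y_mem hj hjm.le
  have hR : θ (S.bracket (S.bracket a (y j)) (x 1)) = 0 :=
    hθ (h.map_R_x_one_span_y (a := 2) (by omega)
      (mem_map_of_mem (h.bracket_mem_span_y hm hy1 ha hyj)))
  rw [← h.R_x_one_y hj hjm]
  change θ (S.bracket a (S.bracket (y j) (x 1))) = _
  rw [S.leib10 a (y j) hyj (x 1) (h.x_mem le_rfl hn), map_sub, hR, zero_sub]
  rfl

theorem apply_bracket_y_succ_eq_pow (h : S.IsAdaptedPair n m x y) (hn : 1 ≤ n) (hm : 1 ≤ m)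
    (hy1 : y 1 ∉ S.term 1) (hθ : span ℂ (y '' Icc 3 m) ≤ LinearMap.ker θ) {a : L}
    (ha : a ∈ S.L0) {j : ℕ} (hjm : j < m) :
    θ (S.bracket a (y (j + 1))) = (-1) ^ j * θ (S.bracket ((S.R (x 1) ^ j) a) (y 1)) := by
  induction j generalizing a with
  | zero => simp
  | succ j ih =>
    rw [h.apply_bracket_y_succ hn hm hy1 hθ ha (by omega) hjm,
      ih (a := S.R (x 1) a) (S.g00 _ ha _ (h.x_mem le_rfl hn)) (by omega), ← Module.End.mul_apply,
      ← pow_succ, pow_succ (-1 : ℂ)]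
    ring

theorem apply_bracket_pow_R_y_one_eq_zero_of_forall_lt (h : S.IsAdaptedPair n m x y) (hn : 1 ≤ n)
    (hm : 2 ≤ m) (hy1 : y 1 ∉ S.term 1) (hθ : span ℂ (y '' Icc 3 m) ≤ LinearMap.ker θ)
    (hθ2 : θ (y 2) ≠ 0) {k : ℕ} (hk : 1 ≤ k)
    (hlt : ∀ j, k < j → ∀ a ∈ S.L0, θ (S.bracket ((S.R (x 1) ^ j) a) (y 1)) = 0) {a : L}
    (ha : a ∈ S.L0) : θ (S.bracket ((S.R (x 1) ^ k) a) (y 1)) = 0 := by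
  set a' := (S.R (x 1) ^ (k - 1)) a
  have ha' : a' ∈ S.L0 := h.pow_R_x_one_mem_L0 ha _
  have hb : (S.R (x 1) ^ k) a = S.R (x 1) a' := by
    rw [← Module.End.mul_apply, ← pow_succ', Nat.sub_add_cancel hk]
  obtain ⟨r, w, hw, hrw⟩ := mem_span_insert.mp <| image_Icc_eq_insert y hm ▸
    h.bracket_mem_span_y (by omega) hy1 (h.pow_R_x_one_mem_L0 ha k) (h.y_mem le_rfl (by omega))
  have hθw : θ (S.bracket a' w) = 0 := by
    refine (span_le (p := LinearMap.ker (θ ∘ₗ S.bracket a')).mpr ?_ hw : _)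
    rintro _ ⟨l, ⟨hl, hlm⟩, rfl⟩
    rw [SetLike.mem_coe, LinearMap.mem_ker, LinearMap.comp_apply, show l = l - 1 + 1 by omega,
      h.apply_bracket_y_succ_eq_pow hn (by omega) hy1 hθ ha' (by omega), ← Module.End.mul_apply,
      ← pow_add, hlt _ (by omega) a ha, mul_zero]
  have hθb : θ (S.bracket ((S.R (x 1) ^ k) a) (y 1)) = r * θ (y 2) := by
    rw [hrw, map_add, map_smul, LinearMap.mem_ker.mp (hθ hw), add_zero, smul_eq_mul]
  have hy2 : θ (S.bracket a' (y 2)) = -(r * θ (y 2)) := by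
    rw [h.apply_bracket_y_succ hn (by omega) hy1 hθ ha' le_rfl hm, ← hb, hθb]
  have h0 := congrArg θ (h.bracket_bracket_y_one_eq_zero (by omega)
    (h.pow_R_x_one_mem_span ha hk) a')
  rw [hrw, map_add, map_smul, map_add, map_smul, hy2, hθw, smul_eq_mul, add_zero, map_zero,
    mul_neg, neg_eq_zero, ← mul_assoc, mul_eq_zero, mul_self_eq_zero] at h0
  rw [hθb, h0.resolve_right hθ2, zero_mul]

theorem apply_bracket_pow_R_y_one_eq_zero (h : S.IsAdaptedPair n m x y) (hn : 1 ≤ n) (hm : 2 ≤ m)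
    (hy1 : y 1 ∉ S.term 1) (hθ : span ℂ (y '' Icc 3 m) ≤ LinearMap.ker θ) (hθ2 : θ (y 2) ≠ 0)
    {k : ℕ} (hk : 1 ≤ k) {a : L} (ha : a ∈ S.L0) :
    θ (S.bracket ((S.R (x 1) ^ k) a) (y 1)) = 0 := by
  induction hd : n - k using Nat.strong_induction_on generalizing k a with
  | _ d ih =>
  rcases le_or_gt n k with hnk | hkn
  · rw [← h.span_x_eq_L0] at ha
    have := mem_map_of_mem (f := S.R (x 1) ^ k) ha
    rw [h.map_pow_R_x_one_span_x_eq_bot le_rfl (by omega), mem_bot] at this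
    rw [this, map_zero, LinearMap.zero_apply, map_zero]
  · exact h.apply_bracket_pow_R_y_one_eq_zero_of_forall_lt hn hm hy1 hθ hθ2 hk
      (fun j hj a ha => ih (n - j) (by omega) (by omega) ha rfl) ha

end

theorem bracket_x_y_mem_span (h : S.IsAdaptedPair n m x y) (hn : 1 ≤ n) (hm : 2 ≤ m)
    (hy1 : y 1 ∉ S.term 1) {i j : ℕ} (hi : 2 ≤ i) (hin : i ≤ n) (hj : 1 ≤ j) (hjm : j ≤ m) :
    S.bracket (x i) (y j) ∈ span ℂ (y '' Icc 3 m) := by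
  obtain ⟨θ, hθ2, hθ⟩ := exists_dual_map_eq_bot_of_notMem
    (fun hy => h.y_two_notMem_span hm (span_mono subset_union_right hy)) inferInstance
  rw [← LinearMap.le_ker_iff_map] at hθ
  obtain ⟨r, w, hw, hrw⟩ := mem_span_insert.mp <| image_Icc_eq_insert y hm ▸
    h.bracket_mem_span_y (by omega) hy1 (h.x_mem (by omega) hin) (h.y_mem hj hjm)
  have hxi : x i = S.R (x 1) (x (i - 1)) := by
    rw [h.R_x_one_x (by omega) (by omega), Nat.sub_add_cancel (by omega)]
  have hθ0 : θ (S.bracket (x i) (y j)) = 0 := by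
    rw [show j = j - 1 + 1 by omega, h.apply_bracket_y_succ_eq_pow hn (by omega) hy1 hθ
      (h.x_mem (by omega) hin) (by omega), hxi, ← Module.End.mul_apply, ← pow_succ,
      h.apply_bracket_pow_R_y_one_eq_zero hn hm hy1 hθ hθ2 (by omega)
        (h.x_mem (by omega) (by omega)), mul_zero]
  rw [hrw, map_add, map_smul, LinearMap.mem_ker.mp (hθ hw), add_zero, smul_eq_mul,
    mul_eq_zero] at hθ0
  rw [hrw, hθ0.resolve_right hθ2, zero_smul, zero_add]
  exact hw

theorem term_two_le (h : S.IsAdaptedPair n m x y) (hn : 1 ≤ n) (hm : 2 ≤ m)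
    (hx1 : x 1 ∉ S.term 1) (hy1 : y 1 ∉ S.term 1) :
    S.term 2 ≤ span ℂ (x '' Icc 2 n ∪ y '' Icc 3 m) := by
  have hX : span ℂ (x '' Icc 2 n) ≤ span ℂ (x '' Icc 2 n ∪ y '' Icc 3 m) :=
    span_mono subset_union_left
  have hY : span ℂ (y '' Icc 3 m) ≤ span ℂ (x '' Icc 2 n ∪ y '' Icc 3 m) :=
    span_mono subset_union_right
  rw [term_succ]
  refine (map₂_le_map₂ (h.term_one_le_span hn (by omega) hx1 hy1) h.span_eq_top.ge).trans ?_
  rw [map₂_span_span, span_le]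
  rintro _ ⟨a, ha, b, hb, rfl⟩
  rcases hb with ⟨k, ⟨hk, hkn⟩, rfl⟩ | ⟨l, ⟨hl, hlm⟩, rfl⟩
  · rcases hk.eq_or_lt with rfl | hk
    · rcases ha with ⟨i, ⟨hi, hin⟩, rfl⟩ | ⟨j, ⟨hj, hjm⟩, rfl⟩
      · refine hX (span_mono (image_mono (Icc_subset_Icc_left (by omega)))
          (h.map_R_x_one_span_x (a := 2) (by omega) (mem_map_of_mem ?_)))
        exact subset_span ⟨i, ⟨hi, hin⟩, rfl⟩
      · exact hY (h.map_R_x_one_span_y (a := 2) (by omega)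
          (mem_map_of_mem (subset_span ⟨j, ⟨hj, hjm⟩, rfl⟩)))
    · have : S.bracket a (x k) = 0 := LinearMap.congr_fun (h.R_x_eq_zero hk hkn) a
      change S.bracket a (x k) ∈ _
      rw [this]
      exact zero_mem _
  · rcases ha with ⟨i, ⟨hi, hin⟩, rfl⟩ | ⟨j, ⟨hj, hjm⟩, rfl⟩
    · exact hY (h.bracket_x_y_mem_span hn hm hy1 hi hin hl hlm)
    · exact hX (h.term_one_inf_L0_le hn hx1 ⟨S.bracket_mem_term (k := 0) mem_top _,
        S.g11 _ (h.y_mem (by omega) hjm) _ (h.y_mem hl hlm)⟩)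

end LeibnizSuper.IsAdaptedPair

open LeibnizSuper in
theorem term_two_eq_span_general {L : Type*} [AddCommGroup L] [Module ℂ L]
    [FiniteDimensional ℂ L] (S : LeibnizSuper L) (n m : ℕ)
    (hn : 3 ≤ n) (hm : 3 ≤ m)
    (hnil : S.HasNilindex (n + m))
    (x y : ℕ → L) (hadapt : S.IsAdaptedPair n m x y) :
    S.term 2 = Submodule.span ℂ ((x '' Set.Icc 2 n) ∪ (y '' Set.Icc 3 m)) ∧
      y 2 ∉ S.term 2 := by
  have hx1 := hadapt.x_one_notMem_term_one (by omega) (by omega) hnil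
  have hy1 := hadapt.y_one_notMem_term_one (by omega) (by omega) hnil
  have hle := hadapt.term_two_le (by omega) (by omega) hx1 hy1
  have hdim : Module.finrank ℂ (Submodule.span ℂ (x '' Set.Icc 2 n ∪ y '' Set.Icc 3 m)) ≤
      Module.finrank ℂ (S.term 2) :=
    (finrank_span_image_Icc_union_le (by omega) (by omega)).trans
      (hnil.le_finrank_term (k := 2) (by omega))
  have heq := Submodule.eq_of_le_of_finrank_le hle hdim
  exact ⟨heq, heq ▸ hadapt.y_two_notMem_span (by omega)⟩

open LeibnizSuper in
/-- In a zero-filiform Leibniz superalgebra `L ∈ ZF^{n,m}` (`n, m ≥ 3`) of nilindex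
`n+m` with adapted basis, `L³` equals the span of `{x₂,…,x_n, y₃,…,y_m}`; in
particular `y₂ ∉ L³`. -/
theorem term_two_eq_span {L : Type*} [AddCommGroup L] [Module ℂ L]
    [FiniteDimensional ℂ L] (S : LeibnizSuper L) (n m : ℕ)
    (hn : 3 ≤ n) (hm : 3 ≤ m) (hzf : S.ZeroFiliform n m)
    (hnil : S.HasNilindex (n + m))
    (x y : ℕ → L) (hadapt : S.IsAdaptedPair n m x y) :
    S.term 2 = Submodule.span ℂ ((x '' Set.Icc 2 n) ∪ (y '' Set.Icc 3 m)) ∧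
      y 2 ∉ S.term 2 :=
  term_two_eq_span_general S n m hn hm hnil x y hadapt
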